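/- Let $p \geq 2$, $\delta \in [0,1]$, and $G_{p,\delta}(x,y) = |y|^2[(|x|+|y|)^\delta(1+|x|+|y|)^{1-\delta}]^{p-2}$. There is a constant $C = C(p)$ such that for all $a, b, y \in \mathbb{R}^d$: $G_{p,\delta}(a, y) \leq C\,(G_{p,\delta}(b, y) + G_{p,\delta}(b, a - b))$. -/
import Mathlib

/-- The weight function `G_{p,δ}(x,y) = |y|² [(|x|+|y|)^δ (1+|x|+|y|)^{1-δ}]^{p-2}`
(equal to `0` when `|x|+|y| = 0`). -/
noncomputable def Gpd (p δ : ℝ) {d : ℕ} (x y : EuclideanSpace ℝ (Fin d)) : ℝ :=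
  ‖y‖ ^ 2 * ((‖x‖ + ‖y‖) ^ δ * (1 + ‖x‖ + ‖y‖) ^ (1 - δ)) ^ (p - 2)

/-- Auxiliary weight `ω(s) = s^δ (1+s)^{1-δ}`. -/
noncomputable def om (δ s : ℝ) : ℝ := s ^ δ * (1 + s) ^ (1 - δ)

lemma om_nonneg (δ : ℝ) {s : ℝ} (hs : 0 ≤ s) : 0 ≤ om δ s :=
  mul_nonneg (Real.rpow_nonneg hs δ) (Real.rpow_nonneg (by linarith) _)

lemma om_mono {δ : ℝ} (h0 : 0 ≤ δ) (h1 : δ ≤ 1) {s t : ℝ} (hs : 0 ≤ s) (hst : s ≤ t) :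
    om δ s ≤ om δ t :=
  mul_le_mul (Real.rpow_le_rpow hs hst h0)
    (Real.rpow_le_rpow (by linarith) (by linarith) (by linarith))
    (Real.rpow_nonneg (by linarith) _) (Real.rpow_nonneg (by linarith) _)

lemma om_double {δ : ℝ} (h0 : 0 ≤ δ) (h1 : δ ≤ 1) {s : ℝ} (hs : 0 ≤ s) :
    om δ (2 * s) ≤ 2 * om δ s := by
  unfold om
  have step1 : (2*s) ^ δ * (1 + 2*s) ^ (1-δ) ≤ (2*s) ^ δ * (2*(1+s)) ^ (1-δ) := by
    apply mul_le_mul_of_nonneg_left _ (Real.rpow_nonneg (by linarith) _)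
    exact Real.rpow_le_rpow (by linarith) (by linarith) (by linarith)
  refine step1.trans (le_of_eq ?_)
  rw [Real.mul_rpow (by norm_num) hs, Real.mul_rpow (by norm_num) (by linarith)]
  have : (2:ℝ) ^ δ * (2:ℝ) ^ (1-δ) = 2 := by
    rw [← Real.rpow_add (by norm_num)]
    norm_num
  calc (2:ℝ)^δ * s^δ * ((2:ℝ)^(1-δ) * (1+s)^(1-δ))
      = ((2:ℝ)^δ * (2:ℝ)^(1-δ)) * (s^δ * (1+s)^(1-δ)) := by ring
    _ = 2 * (s^δ * (1+s)^(1-δ)) := by rw [this]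

/-- Shift estimate: the first argument of `G_{p,δ}` can be replaced by a nearby vector
at the cost of a term measuring the difference, with a constant depending only on `p`. -/
theorem Gpd_shift_estimate (p : ℝ) (hp : 2 ≤ p) :
    ∃ C > 0, ∀ (δ : ℝ), δ ∈ Set.Icc (0:ℝ) 1 → ∀ (d : ℕ) (a b y : EuclideanSpace ℝ (Fin d)),
      Gpd p δ a y ≤ C * (Gpd p δ b y + Gpd p δ b (a - b)) := by
  refine ⟨2 ^ (p - 1), Real.rpow_pos_of_pos two_pos _, ?_⟩
  rintro δ ⟨h0, h1⟩ d a b y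
  have hpe : 0 ≤ p - 2 := by linarith
  set s0 : ℝ := ‖a‖ + ‖y‖ with hs0def
  set s1 : ℝ := ‖b‖ + ‖y‖ with hs1def
  set s2 : ℝ := ‖b‖ + ‖a - b‖ with hs2def
  have hy : (0:ℝ) ≤ ‖y‖ := norm_nonneg _
  have hb : (0:ℝ) ≤ ‖b‖ := norm_nonneg _
  have hab : (0:ℝ) ≤ ‖a - b‖ := norm_nonneg _
  have hs0 : 0 ≤ s0 := add_nonneg (norm_nonneg _) hy
  have hs1 : 0 ≤ s1 := add_nonneg hb hy
  have hs2 : 0 ≤ s2 := add_nonneg hb hab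
  have hm : 0 ≤ max s1 s2 := le_trans hs1 (le_max_left _ _)
  have hna : ‖a‖ ≤ ‖b‖ + ‖a - b‖ := by
    have := norm_sub_norm_le a b
    linarith
  have hsum : s0 ≤ 2 * max s1 s2 := by
    have h1' : s1 ≤ max s1 s2 := le_max_left _ _
    have h2' : s2 ≤ max s1 s2 := le_max_right _ _
    simp only [hs0def, hs1def, hs2def] at *
    linarith
  have key : om δ s0 ≤ 2 * om δ (max s1 s2) :=
    (om_mono h0 h1 hs0 hsum).trans (om_double h0 h1 hm)
  -- weight inequality raised to p-2
  set A : ℝ := om δ s1 ^ (p - 2) with hA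
  set B : ℝ := om δ s2 ^ (p - 2) with hB
  have hAnn : 0 ≤ A := Real.rpow_nonneg (om_nonneg _ hs1) _
  have hBnn : 0 ≤ B := Real.rpow_nonneg (om_nonneg _ hs2) _
  have hmax : om δ (max s1 s2) ^ (p - 2) ≤ A + B := by
    rcases le_total s1 s2 with h | h
    · rw [max_eq_right h]; exact le_add_of_nonneg_left hAnn
    · rw [max_eq_left h]; exact le_add_of_nonneg_right hBnn
  have keyp : om δ s0 ^ (p - 2) ≤ 2 ^ (p - 2) * (A + B) := by
    calc om δ s0 ^ (p - 2) ≤ (2 * om δ (max s1 s2)) ^ (p - 2) :=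
          Real.rpow_le_rpow (om_nonneg _ hs0) key hpe
      _ = 2 ^ (p - 2) * om δ (max s1 s2) ^ (p - 2) :=
          Real.mul_rpow (by norm_num) (om_nonneg _ hm)
      _ ≤ 2 ^ (p - 2) * (A + B) := by
          exact mul_le_mul_of_nonneg_left hmax (Real.rpow_nonneg (by norm_num) _)
  -- second term estimate
  have second : ‖y‖ ^ 2 * B ≤ ‖y‖ ^ 2 * A + ‖a - b‖ ^ 2 * B := by
    rcases le_total ‖a - b‖ ‖y‖ with h | h
    · have hs21 : s2 ≤ s1 := by simp only [hs1def, hs2def]; linarith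
      have hBA : B ≤ A :=
        Real.rpow_le_rpow (om_nonneg _ hs2) (om_mono h0 h1 hs2 hs21) hpe
      have : ‖y‖ ^ 2 * B ≤ ‖y‖ ^ 2 * A :=
        mul_le_mul_of_nonneg_left hBA (by positivity)
      exact this.trans (le_add_of_nonneg_right (by positivity))
    · have : ‖y‖ ^ 2 * B ≤ ‖a - b‖ ^ 2 * B :=
        mul_le_mul_of_nonneg_right (pow_le_pow_left₀ hy h 2) hBnn
      exact this.trans (le_add_of_nonneg_left (by positivity))
  have hGa : Gpd p δ a y = ‖y‖ ^ 2 * om δ s0 ^ (p - 2) := by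
    simp only [Gpd, om, hs0def]; ring_nf
  have hGb : Gpd p δ b y = ‖y‖ ^ 2 * A := by
    simp only [Gpd, om, hA, hs1def]; ring_nf
  have hGab : Gpd p δ b (a - b) = ‖a - b‖ ^ 2 * B := by
    simp only [Gpd, om, hB, hs2def]; ring_nf
  rw [hGa, hGb, hGab]
  have step : ‖y‖ ^ 2 * om δ s0 ^ (p - 2) ≤ 2 ^ (p - 2) * (‖y‖ ^ 2 * A + ‖y‖ ^ 2 * B) := by
    calc ‖y‖ ^ 2 * om δ s0 ^ (p - 2) ≤ ‖y‖ ^ 2 * (2 ^ (p - 2) * (A + B)) :=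
          mul_le_mul_of_nonneg_left keyp (by positivity)
      _ = 2 ^ (p - 2) * (‖y‖ ^ 2 * A + ‖y‖ ^ 2 * B) := by ring
  have htwo : (2:ℝ) ^ (p - 2) * 2 = 2 ^ (p - 1) := by
    have : (2:ℝ) ^ (p - 2) * 2 ^ (1:ℝ) = 2 ^ (p - 2 + 1) := (Real.rpow_add two_pos _ _).symm
    simpa [Real.rpow_one, show p - 2 + 1 = p - 1 by ring] using this
  refine step.trans ?_
  have h2pos : (0:ℝ) ≤ 2 ^ (p - 2) := Real.rpow_nonneg (by norm_num) _
  have : ‖y‖ ^ 2 * A + ‖y‖ ^ 2 * B ≤ 2 * (‖y‖ ^ 2 * A + ‖a - b‖ ^ 2 * B) := by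
    nlinarith [second, mul_nonneg (sq_nonneg ‖y‖) hAnn]
  calc 2 ^ (p - 2) * (‖y‖ ^ 2 * A + ‖y‖ ^ 2 * B)
      ≤ 2 ^ (p - 2) * (2 * (‖y‖ ^ 2 * A + ‖a - b‖ ^ 2 * B)) :=
        mul_le_mul_of_nonneg_left this h2pos
    _ = (2 ^ (p - 2) * 2) * (‖y‖ ^ 2 * A + ‖a - b‖ ^ 2 * B) := by ring
    _ = 2 ^ (p - 1) * (‖y‖ ^ 2 * A + ‖a - b‖ ^ 2 * B) := by rw [htwo]
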